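/- For every integer k ≥ 0 and every paravector x ∈ ℝ^{m+1} ⊂ R_m (the Clifford algebra of signature (0,m)), the decomposition x^k = -(1/(2(m-1)(k+1))) ( Δ_{m+1}(x^{k+2}) - x^c Δ_{m+1}(x^{k+1}) ) holds, where Δ_{m+1} is the Euclidean Laplacian of ℝ^{m+1} acting componentwise and x^c is the Clifford conjugate. -/

import Mathlib

/-!
Write `u = x`, `v = xᶜ` and `fₙ(c) = cⁿ`. As the map `c ↦ c` is linear with `∂ᵢ c = eᵢ`
(`e₀ = 1`), the product rule applied to `fₙ₊₁ = fₙ · c` gives `Δfₙ₊₁ = Δfₙ · u + 2 Gₙ` with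
`Gₙ = ∑ᵢ ∂ᵢfₙ(x) eᵢ`, and applied to `fₙ₊₁ = c · fₙ` it gives `Gₙ₊₁ = u Gₙ + ∑ᵢ eᵢ uⁿ eᵢ`.
Powers of a paravector are paravectors, and for a paravector `a` one has
`∑ᵢ eᵢ a eᵢ = (1 - m) aᶜ`; hence `Gₙ₊₁ = u Gₙ + (1 - m) vⁿ`. Since `u` and `v` commute,
these two recurrences solve to `Δfₖ₊₂ - v Δfₖ₊₁ = 2 (1 - m) (k + 1) uᵏ`.
-/

noncomputable section
namespace PaperStmt

/-- Partial derivative in the `i`-th coordinate direction. -/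
def pd {A : Type*} [NormedAddCommGroup A] [NormedSpace ℝ A] {m : ℕ}
    (i : Fin (m + 1)) (f : (Fin (m + 1) → ℝ) → A) : (Fin (m + 1) → ℝ) → A :=
  fun x => fderiv ℝ f x (Pi.single i 1)

/-- The Euclidean Laplacian `Δ_{m+1} = ∑ᵢ ∂ᵢ²` of `ℝ^{m+1}`, acting
componentwise on `A`-valued functions. -/
def lap {A : Type*} [NormedAddCommGroup A] [NormedSpace ℝ A] {m : ℕ}
    (f : (Fin (m + 1) → ℝ) → A) : (Fin (m + 1) → ℝ) → A :=
  fun x => ∑ i : Fin (m + 1), pd i (pd i f) x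

/-- The negative-definite quadratic form of signature `(0, m)` on `ℝ^m`. -/
def Qneg (m : ℕ) : QuadraticForm ℝ (Fin m → ℝ) :=
  QuadraticMap.weightedSumSquares ℝ (fun _ : Fin m => (-1 : ℝ))

/-- The paravector `x₀ + x₁ e₁ + ⋯ + x_m e_m` of the Clifford algebra
`R_{0,m} = CliffordAlgebra (Qneg m)`. -/
def pv (m : ℕ) (x : Fin (m + 1) → ℝ) : CliffordAlgebra (Qneg m) :=
  algebraMap ℝ _ (x 0) +
    ∑ i : Fin m, x i.succ • CliffordAlgebra.ι (Qneg m) (Pi.single i 1)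

/-- The Clifford conjugate `xᶜ = x₀ - x₁ e₁ - ⋯ - x_m e_m` of a paravector. -/
def pvConj (m : ℕ) (x : Fin (m + 1) → ℝ) : CliffordAlgebra (Qneg m) :=
  algebraMap ℝ _ (x 0) -
    ∑ i : Fin m, x i.succ • CliffordAlgebra.ι (Qneg m) (Pi.single i 1)

theorem sub_mul_eq_smul_pow_of_recurrence {𝕜 R : Type*} [CommRing 𝕜] [Ring R] [Algebra 𝕜 R]
    {u v : R} (huv : Commute u v) (c : 𝕜) {G P : ℕ → R} (hG0 : G 0 = 0)
    (hG : ∀ n, G (n + 1) = u * G n + c • v ^ n) (hP0 : P 0 = 0)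
    (hP : ∀ n, P (n + 1) = P n * u + 2 • G n) (n : ℕ) :
    P (n + 2) - v * P (n + 1) = (2 * ((n : 𝕜) + 1) * c) • u ^ n := by
  have hGv : ∀ n, G (n + 1) - v * G n = c • u ^ n := by
    intro n
    induction n with
    | zero => simp [hG, hG0]
    | succ n ih =>
      calc G (n + 2) - v * G (n + 1)
          = u * G (n + 1) - (v * u) * G n + (c • v ^ (n + 1) - v * c • v ^ n) := by
            rw [hG (n + 1), hG n]; noncomm_ring
        _ = u * (G (n + 1) - v * G n) := by
            rw [← huv.eq, mul_smul_comm, ← pow_succ', sub_self, add_zero]; noncomm_ring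
        _ = c • u ^ (n + 1) := by rw [ih, mul_smul_comm, ← pow_succ']
  have hPv : ∀ n, P (n + 2) - v * P (n + 1)
      = (P (n + 1) - v * P n) * u + 2 • (G (n + 1) - v * G n) := by
    intro n; rw [hP (n + 1), hP n]; noncomm_ring
  have hP1 : P 1 - v * P 0 = 0 := by rw [hP, hP0, hG0]; simp
  induction n with
  | zero => rw [hPv, hP1, hGv, zero_mul, zero_add]; push_cast; module
  | succ n ih =>
    rw [hPv, ih, hGv, smul_mul_assoc, ← pow_succ]
    push_cast
    module

section Clifford
open CliffordAlgebra
variable {m : ℕ}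

theorem Qneg_apply (y : Fin m → ℝ) : Qneg m y = -∑ j, y j * y j := by
  simp [Qneg, QuadraticMap.weightedSumSquares_apply]

theorem polar_Qneg_single (j : Fin m) (y : Fin m → ℝ) :
    QuadraticMap.polar (Qneg m) (Pi.single j 1) y = -(2 * y j) := by
  simp only [QuadraticMap.polar, Qneg_apply, Pi.add_apply, Pi.single_apply, mul_add, add_mul,
    mul_ite, ite_mul, mul_one, one_mul, mul_zero, zero_mul, Finset.sum_add_distrib,
    Finset.sum_ite_eq', Finset.mem_univ, ↓reduceIte]
  ring

theorem ι_single_mul_self (j : Fin m) :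
    ι (Qneg m) (Pi.single j 1) * ι (Qneg m) (Pi.single j 1) = -1 := by
  rw [ι_sq_scalar, Qneg_apply]
  simp [Pi.single_apply]

theorem ι_single_mul_ι_mul_ι_single (j : Fin m) (y : Fin m → ℝ) :
    ι (Qneg m) (Pi.single j 1) * ι (Qneg m) y * ι (Qneg m) (Pi.single j 1)
      = ι (Qneg m) y - (2 * y j) • ι (Qneg m) (Pi.single j 1) := by
  have h := ι_mul_ι_add_swap (Q := Qneg m) (Pi.single j 1) y
  rw [polar_Qneg_single, ← eq_sub_iff_add_eq] at h
  rw [h, sub_mul, mul_assoc, ι_single_mul_self, ← Algebra.smul_def, mul_neg, mul_one, neg_smul]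
  abel

theorem sum_smul_ι_single (y : Fin m → ℝ) :
    ∑ j, y j • ι (Qneg m) (Pi.single j 1) = ι (Qneg m) y := by
  simp_rw [← map_smul, ← map_sum]
  congr
  ext j
  simp [Finset.sum_apply, Pi.single_apply]

theorem sum_ι_single_mul_ι_mul_ι_single (y : Fin m → ℝ) :
    ∑ j, ι (Qneg m) (Pi.single j 1) * ι (Qneg m) y * ι (Qneg m) (Pi.single j 1)
      = ((m : ℝ) - 2) • ι (Qneg m) y := by
  simp only [ι_single_mul_ι_mul_ι_single, Finset.sum_sub_distrib, Finset.sum_const,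
    Finset.card_univ, Fintype.card_fin, mul_smul, ← Finset.smul_sum, sum_smul_ι_single]
  rw [← Nat.cast_smul_eq_nsmul ℝ]
  module

theorem pv_eq (x : Fin (m + 1) → ℝ) :
    pv m x = algebraMap ℝ _ (x 0) + ι (Qneg m) (Fin.tail x) := by
  rw [pv, ← sum_smul_ι_single]
  rfl

theorem pvConj_eq (x : Fin (m + 1) → ℝ) :
    pvConj m x = algebraMap ℝ _ (x 0) - ι (Qneg m) (Fin.tail x) := by
  rw [pvConj, ← sum_smul_ι_single]
  rfl

theorem involute_pv (x : Fin (m + 1) → ℝ) : involute (pv m x) = pvConj m x := by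
  rw [pv_eq, pvConj_eq, map_add, involute_ι, AlgHom.commutes, sub_eq_add_neg]

theorem pv_single_zero : pv m (Pi.single 0 1) = 1 := by
  simp [pv]

theorem pv_single_succ (j : Fin m) : pv m (Pi.single j.succ 1) = ι (Qneg m) (Pi.single j 1) := by
  simp [pv, Pi.single_apply]

theorem commute_pv_pvConj (x : Fin (m + 1) → ℝ) : Commute (pv m x) (pvConj m x) := by
  rw [pv_eq, pvConj_eq]
  exact (Algebra.commute_algebraMap_left _ _).add_left
    ((Algebra.commute_algebraMap_right _ _).sub_right (Commute.refl _))

theorem sum_pv_single_mul_mul_pv_single (y : Fin (m + 1) → ℝ) :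
    ∑ i, pv m (Pi.single i 1) * pv m y * pv m (Pi.single i 1) = (1 - (m : ℝ)) • pvConj m y := by
  have hterm (j : Fin m) :
      ι (Qneg m) (Pi.single j 1) * pv m y * ι (Qneg m) (Pi.single j 1)
        = -algebraMap ℝ _ (y 0)
          + ι (Qneg m) (Pi.single j 1) * ι (Qneg m) (Fin.tail y) * ι (Qneg m) (Pi.single j 1) := by
    rw [pv_eq, mul_add, add_mul, ← Algebra.commutes, mul_assoc, ι_single_mul_self, mul_neg_one]
  rw [Fin.sum_univ_succ, pv_single_zero, one_mul, mul_one]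
  simp_rw [pv_single_succ, hterm]
  rw [Finset.sum_add_distrib, sum_ι_single_mul_ι_mul_ι_single, Finset.sum_const, Finset.card_univ,
    Fintype.card_fin, pv_eq, pvConj_eq]
  simp only [Algebra.algebraMap_eq_smul_one, ← Nat.cast_smul_eq_nsmul ℝ]
  module

def pvLinearMap (m : ℕ) : (Fin (m + 1) → ℝ) →ₗ[ℝ] CliffordAlgebra (Qneg m) where
  toFun := pv m
  map_add' x y := by
    simp only [pv, Pi.add_apply, map_add, add_smul, Finset.sum_add_distrib]
    abel
  map_smul' r x := by
    simp only [pv, Pi.smul_apply, smul_eq_mul, Algebra.algebraMap_eq_smul_one, mul_smul,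
      smul_add, Finset.smul_sum, RingHom.id_apply]

theorem pvLinearMap_apply (x : Fin (m + 1) → ℝ) : pvLinearMap m x = pv m x := rfl

theorem pv_mul_self (x : Fin (m + 1) → ℝ) :
    pv m x * pv m x = (2 * x 0) • pv m x + (Qneg m (Fin.tail x) - x 0 ^ 2) • 1 := by
  rw [pv_eq, mul_add, add_mul, add_mul, ι_sq_scalar, ← Algebra.commutes]
  simp only [Algebra.algebraMap_eq_smul_one, mul_smul_comm, smul_mul_assoc,
    one_mul, mul_one]
  module

theorem exists_pv_eq_pv_pow (x : Fin (m + 1) → ℝ) (n : ℕ) : ∃ y, pv m x ^ n = pv m y := by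
  suffices ∃ a b : ℝ, pv m x ^ n = a • 1 + b • pv m x by
    obtain ⟨a, b, h⟩ := this
    exact ⟨a • Pi.single 0 1 + b • x, by
      rw [h, ← pvLinearMap_apply (a • _ + _), map_add, map_smul, map_smul, pvLinearMap_apply,
        pv_single_zero, pvLinearMap_apply]⟩
  induction n with
  | zero => exact ⟨1, 0, by simp⟩
  | succ n ih =>
    obtain ⟨a, b, h⟩ := ih
    refine ⟨b * (Qneg m (Fin.tail x) - x 0 ^ 2), a + b * (2 * x 0), ?_⟩
    rw [pow_succ, h, add_mul, smul_mul_assoc, smul_mul_assoc, pv_mul_self, one_mul]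
    module

theorem sum_pv_single_mul_pow_mul_pv_single (x : Fin (m + 1) → ℝ) (n : ℕ) :
    ∑ i, pv m (Pi.single i 1) * pv m x ^ n * pv m (Pi.single i 1)
      = (1 - (m : ℝ)) • pvConj m x ^ n := by
  obtain ⟨y, hy⟩ := exists_pv_eq_pv_pow x n
  rw [hy, sum_pv_single_mul_mul_pv_single, ← involute_pv, ← involute_pv, ← map_pow, hy]

end Clifford

section Calculus
variable {A : Type*} [NormedRing A] [NormedAlgebra ℝ A] {m : ℕ}

theorem pd_const (i : Fin (m + 1)) (a : A) : pd i (fun _ => a) = fun _ => 0 := by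
  funext x
  simp [pd]

theorem pd_clm (i : Fin (m + 1)) (L : (Fin (m + 1) → ℝ) →L[ℝ] A) :
    pd i L = fun _ => L (Pi.single i 1) := by
  funext x
  simp [pd, L.fderiv]

theorem pd_add (i : Fin (m + 1)) {f g : (Fin (m + 1) → ℝ) → A} (hf : Differentiable ℝ f)
    (hg : Differentiable ℝ g) : pd i (fun c => f c + g c) = fun c => pd i f c + pd i g c := by
  funext x
  simp [pd, fderiv_fun_add (hf x) (hg x)]

theorem pd_mul (i : Fin (m + 1)) {f g : (Fin (m + 1) → ℝ) → A} (hf : Differentiable ℝ f)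
    (hg : Differentiable ℝ g) :
    pd i (fun c => f c * g c) = fun c => pd i f c * g c + f c * pd i g c := by
  funext x
  simp [pd, fderiv_fun_mul' (hf x) (hg x), add_comm]

theorem pd_mul_const (i : Fin (m + 1)) {f : (Fin (m + 1) → ℝ) → A} (hf : Differentiable ℝ f)
    (a : A) : pd i (fun c => f c * a) = fun c => pd i f c * a := by
  funext x
  simp [pd, fderiv_mul_const' (hf x)]

theorem differentiable_pd {f : (Fin (m + 1) → ℝ) → A} (hf : ContDiff ℝ 2 f)
    (i : Fin (m + 1)) : Differentiable ℝ (pd i f) :=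
  ((hf.fderiv_right (by norm_num)).clm_apply contDiff_const).differentiable one_ne_zero

theorem lap_mul_clm {f : (Fin (m + 1) → ℝ) → A} (hf : ContDiff ℝ 2 f)
    (L : (Fin (m + 1) → ℝ) →L[ℝ] A) (x : Fin (m + 1) → ℝ) :
    lap (fun c => f c * L c) x
      = lap f x * L x + 2 • ∑ i, pd i f x * L (Pi.single i 1) := by
  have hf1 : Differentiable ℝ f := hf.differentiable two_ne_zero
  have hpd (i : Fin (m + 1)) : pd i (pd i fun c => f c * L c) x
      = pd i (pd i f) x * L x + 2 • (pd i f x * L (Pi.single i 1)) := by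
    have hfL : pd i (fun c => f c * L c) = fun c => pd i f c * L c + f c * L (Pi.single i 1) := by
      rw [pd_mul i hf1 L.differentiable, pd_clm]
    rw [hfL, pd_add i (f := fun c => pd i f c * L c) (g := fun c => f c * L (Pi.single i 1))
      ((differentiable_pd hf i).mul L.differentiable) (hf1.mul_const _),
      pd_mul i (differentiable_pd hf i) L.differentiable, pd_mul_const i hf1, pd_clm]
    simp only [two_smul]
    abel
  simp only [lap, hpd, Finset.sum_add_distrib, Finset.sum_mul, Finset.smul_sum]

theorem sum_pd_pow_succ_mul (L : (Fin (m + 1) → ℝ) →L[ℝ] A) (n : ℕ) (x : Fin (m + 1) → ℝ) :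
    ∑ i, pd i (fun c => L c ^ (n + 1)) x * L (Pi.single i 1)
      = L x * ∑ i, pd i (fun c => L c ^ n) x * L (Pi.single i 1)
        + ∑ i, L (Pi.single i 1) * L x ^ n * L (Pi.single i 1) := by
  have hpd (i : Fin (m + 1)) : pd i (fun c => L c ^ (n + 1))
      = fun c => L (Pi.single i 1) * L c ^ n + L c * pd i (fun c => L c ^ n) c := by
    simp_rw [pow_succ']
    rw [pd_mul i (f := L) (g := fun c => L c ^ n) L.differentiable (L.differentiable.pow n), pd_clm]
  simp only [hpd, add_mul, Finset.sum_add_distrib, Finset.mul_sum, mul_assoc]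
  abel

end Calculus

theorem clifford_paravector_power_decomposition_general
    {A : Type*} [NormedRing A] [NormedAlgebra ℝ A]
    (m : ℕ) (hm : 2 ≤ m)
    (φ : CliffordAlgebra (Qneg m) →ₐ[ℝ] A)
    (k : ℕ) (x : Fin (m + 1) → ℝ) :
    φ (pv m x) ^ k
      = -((2 * ((m : ℝ) - 1) * ((k : ℝ) + 1))⁻¹) •
          (lap (fun c => φ (pv m c) ^ (k + 2)) x
            - φ (pvConj m x) * lap (fun c => φ (pv m c) ^ (k + 1)) x) := by
  let L : (Fin (m + 1) → ℝ) →L[ℝ] A :=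
    LinearMap.toContinuousLinearMap (φ.toLinearMap ∘ₗ pvLinearMap m)
  have hL (c : Fin (m + 1) → ℝ) : L c = φ (pv m c) := rfl
  have hsandwich (n : ℕ) : ∑ i, L (Pi.single i 1) * L x ^ n * L (Pi.single i 1)
      = (1 - (m : ℝ)) • φ (pvConj m x) ^ n := by
    simp only [hL, ← map_pow, ← map_mul, ← map_sum, sum_pv_single_mul_pow_mul_pv_single, map_smul]
  have hrec := sub_mul_eq_smul_pow_of_recurrence ((commute_pv_pvConj x).map φ) (1 - (m : ℝ))
    (G := fun n => ∑ i, pd i (fun c => L c ^ n) x * L (Pi.single i 1))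
    (P := fun n => lap (fun c => L c ^ n) x)
    (by simp [pd_const]) (fun n => by rw [sum_pd_pow_succ_mul, hsandwich]; rfl)
    (by simp [lap, pd_const])
    (fun n => by simp_rw [pow_succ]; exact lap_mul_clm (L.contDiff.pow n) L x) k
  have hscalar : -(2 * ((m : ℝ) - 1) * ((k : ℝ) + 1))⁻¹ * (2 * ((k : ℝ) + 1) * (1 - m)) = 1 := by
    have : (2 : ℝ) ≤ m := by exact_mod_cast hm
    field_simp [show (m : ℝ) - 1 ≠ 0 by linarith]
    ring
  simp only [← hL] at hrec ⊢
  rw [hrec, smul_smul, hscalar, one_smul]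

/-- **Axially monogenic decomposition of paravector powers.**
For every integer `k ≥ 0` and every paravector `x ∈ ℝ^{m+1} ⊂ R_m` (the
Clifford algebra of signature `(0,m)`, here realized inside a normed real
algebra `A` via an injective algebra morphism `φ`, which provides the topology
needed to take derivatives), one has
`x^k = -(1/(2(m-1)(k+1))) ( Δ_{m+1}(x^{k+2}) - xᶜ Δ_{m+1}(x^{k+1}) )`,
where `Δ_{m+1}` is the Euclidean Laplacian of `ℝ^{m+1}` acting componentwise. -/
theorem clifford_paravector_power_decomposition
    {A : Type*} [NormedRing A] [NormedAlgebra ℝ A]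
    (m : ℕ) (hm : 2 ≤ m)
    (φ : CliffordAlgebra (Qneg m) →ₐ[ℝ] A) (hφ : Function.Injective φ)
    (k : ℕ) (x : Fin (m + 1) → ℝ) :
    φ (pv m x) ^ k
      = -((2 * ((m : ℝ) - 1) * ((k : ℝ) + 1))⁻¹) •
          (lap (fun c => φ (pv m c) ^ (k + 2)) x
            - φ (pvConj m x) * lap (fun c => φ (pv m c) ^ (k + 1)) x) :=
  clifford_paravector_power_decomposition_general m hm φ k x

end PaperStmt
end
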